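/- With δ_{-i} = φ_{-i}(h)x^{-i} as above, for all i, j ≥ m one has δ_{-i}δ_{-j} = δ_{-i-j} in the skew Laurent ring K[h][x, x^{-1}; σ], σ(h) = h-1. -/

import Mathlib

open Polynomial LaurentPolynomial

/-- The operator `f(h)x^a` of the skew Laurent ring `K[h][x,x⁻¹;σ]`, `σ(h) = h-1`,
acting on `K[x,x⁻¹]` by `(f(h)x^a) ∗ x^j = f(a+j+1) x^{a+j}`
(so that `h ∗ x^j = (j+1) x^j` and `x^{±1} ∗ x^j = x^{j±1}`). -/
noncomputable def op (K : Type*) [Field K] (f : Polynomial K) (a : ℤ) :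
    LaurentPolynomial K →ₗ[K] LaurentPolynomial K :=
  (Finsupp.lsum K fun j : ℤ =>
    f.eval ((a + j + 1 : ℤ) : K) •
      LinearMap.toSpanSingleton K (LaurentPolynomial K) (LaurentPolynomial.T (a + j))) ∘ₗ
    (AddMonoidAlgebra.coeffLinearEquiv K : LaurentPolynomial K ≃ₗ[K] (ℤ →₀ K)).toLinearMap

/-- `A(m) = K + Σ_{i ≥ m} K x^i`, as a subspace of `K[x,x⁻¹]`. -/
noncomputable def Am (K : Type*) [Field K] (m : ℕ) : Submodule K (LaurentPolynomial K) :=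
  Submodule.span K {p : LaurentPolynomial K | ∃ i : ℤ, (i = 0 ∨ (m : ℤ) ≤ i) ∧ p = T i}

/-- `φ_{-i} = (h+i-1)·∏_{j=m-i+1, j≠1}^{m} (h-j)` (for `i ≥ m`). -/
noncomputable def phi (K : Type*) [Field K] (m i : ℕ) : Polynomial K :=
  (X + Polynomial.C ((i : K) - 1)) *
    ∏ j ∈ (Finset.Icc ((m : ℤ) - i + 1) (m : ℤ)).filter (· ≠ 1),
      (X - Polynomial.C ((j : ℤ) : K))

/-! Composition of the operators is the skew multiplication
`f(h)x^a · g(h)x^b = f(h)g(h-a)x^{a+b}`, so the claim is the polynomial identity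
`φ₋ᵢ(h)·φ₋ⱼ(h+i) = φ₋ᵢ₋ⱼ(h)`. Up to the factor `(h+i-1)/(h-1)`, `φ₋ᵢ(h)` is the rising factorial
`(h-m)(h-m+1)⋯(h-m+i-1)`; rising factorials multiply by `(x)_i (x+i)_j = (x)_{i+j}` and the
correction factors telescope. -/

lemma op_single (K : Type*) [Field K] (f : K[X]) (a k : ℤ) (c : K) :
    op K f a (AddMonoidAlgebra.single k c) =
      AddMonoidAlgebra.single (a + k) (f.eval ((a + k + 1 : ℤ) : K) * c) := by
  have hcoeff : AddMonoidAlgebra.coeffLinearEquiv K (AddMonoidAlgebra.single k c) =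
      Finsupp.single k c := rfl
  simp only [op, LinearMap.comp_apply, LinearEquiv.coe_coe, hcoeff, Finsupp.lsum_single,
    LinearMap.smul_apply, LinearMap.toSpanSingleton_apply, T, AddMonoidAlgebra.smul_single,
    smul_eq_mul, mul_one, mul_comm]

lemma op_comp_op (K : Type*) [Field K] (f g : K[X]) (a b : ℤ) :
    op K f a ∘ₗ op K g b = op K (f * g.comp (X - (a : K[X]))) (a + b) := by
  refine AddMonoidAlgebra.lhom_ext' fun k => LinearMap.ext fun c => ?_
  simp only [LinearMap.comp_apply, AddMonoidAlgebra.lsingle_apply]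
  rw [op_single, op_single, op_single]
  simp only [eval_mul, eval_comp, eval_sub, eval_X, eval_intCast]
  congr 1
  · ring
  · push_cast
    ring_nf

lemma prod_Icc_X_sub_eq_ascPochhammer_comp (R : Type*) [CommRing R] (a : ℤ) (n : ℕ) :
    ∏ t ∈ Finset.Icc (a - n + 1) a, (X - (t : R[X])) =
      (ascPochhammer R n).comp (X - (a : R[X])) := by
  induction n with
  | zero => simp
  | succ n ih =>
    have hIcc :
        Finset.Icc (a - (n + 1 : ℕ) + 1) a = insert (a - n) (Finset.Icc (a - n + 1) a) := by
      rw [Finset.insert_Icc_add_one_left_eq_Icc (by omega)]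
      push_cast
      ring_nf
    rw [hIcc, Finset.prod_insert (by simp), ih, ascPochhammer_succ_right, mul_comp, mul_comm]
    simp only [add_comp, X_comp, natCast_comp]
    push_cast
    ring

lemma phi_mul_X_sub_one (K : Type*) [Field K] {m i : ℕ} (hm : 1 ≤ m) (hi : m ≤ i) :
    phi K m i * (X - 1) = (X + ((i : K[X]) - 1)) * (ascPochhammer K i).comp (X - (m : K[X])) := by
  have h1 : (1 : ℤ) ∈ Finset.Icc ((m : ℤ) - i + 1) m := by
    simp only [Finset.mem_Icc]; omega
  have hprod := prod_Icc_X_sub_eq_ascPochhammer_comp K m i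
  rw [Int.cast_natCast, ← Finset.mul_prod_erase _ _ h1] at hprod
  rw [phi, Finset.filter_ne', ← hprod]
  simp only [map_intCast, map_sub, map_natCast, map_one, Int.cast_one]
  ring

lemma phi_mul_phi_comp (K : Type*) [Field K] {m i j : ℕ} (hm : 1 ≤ m) (hi : m ≤ i)
    (hj : m ≤ j) : phi K m i * (phi K m j).comp (X + (i : K[X])) = phi K m (i + j) := by
  have hne : (X - 1) * (X + ((i : K[X]) - 1)) ≠ 0 := by
    refine mul_ne_zero (X_sub_C_ne_zero 1) ?_
    rw [show (i : K[X]) - 1 = Polynomial.C ((i : K) - 1) by simp]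
    exact X_add_C_ne_zero _
  refine mul_right_cancel₀ hne ?_
  calc phi K m i * (phi K m j).comp (X + (i : K[X])) * ((X - 1) * (X + ((i : K[X]) - 1)))
      = phi K m i * (X - 1) * (phi K m j * (X - 1)).comp (X + (i : K[X])) := by
        rw [mul_comp, sub_comp, X_comp, one_comp]; ring
    _ = (X + ((i : K[X]) - 1)) * (X + (((i + j : ℕ) : K[X]) - 1)) *
          (ascPochhammer K i * (ascPochhammer K j).comp (X + (i : K[X]))).comp
            (X - (m : K[X])) := by
        rw [phi_mul_X_sub_one K hm hi, phi_mul_X_sub_one K hm hj, mul_comp,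
          mul_comp (ascPochhammer K i), comp_assoc, comp_assoc]
        simp only [add_comp, sub_comp, X_comp, natCast_comp, one_comp]
        push_cast
        ring_nf
    _ = phi K m (i + j) * ((X - 1) * (X + ((i : K[X]) - 1))) := by
        rw [ascPochhammer_mul, ← mul_assoc, phi_mul_X_sub_one K hm (by omega)]
        ring

theorem stmt5_general (K : Type*) [Field K] (m : ℕ) (hm : 2 ≤ m)
    (i j : ℕ) (hi : m ≤ i) (hj : m ≤ j) :
    op K (phi K m i) (-(i : ℤ)) ∘ₗ op K (phi K m j) (-(j : ℤ)) =
      op K (phi K m (i + j)) (-((i : ℤ) + (j : ℤ))) := by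
  rw [op_comp_op, ← phi_mul_phi_comp K (by omega) hi hj, neg_add, Int.cast_neg, Int.cast_natCast,
    sub_neg_eq_add]

/-- `δ₋ᵢ δ₋ⱼ = δ₋ᵢ₋ⱼ` for all `i, j ≥ m`, where `δ₋ᵢ = φ₋ᵢ(h)x^{-i}`.
Equality in the skew Laurent ring `K[h][x,x⁻¹;σ]` (`σ(h) = h-1`) is expressed via
its faithful representation `f(h)x^a ↦ op K f a` on `K[x,x⁻¹]`. -/
theorem stmt5 (K : Type*) [Field K] [CharZero K] (m : ℕ) (hm : 2 ≤ m)
    (i j : ℕ) (hi : m ≤ i) (hj : m ≤ j) :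
    op K (phi K m i) (-(i : ℤ)) ∘ₗ op K (phi K m j) (-(j : ℤ)) =
      op K (phi K m (i + j)) (-((i : ℤ) + (j : ℤ))) :=
  stmt5_general K m hm i j hi hj
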